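/- For every real n ≥ 3 and every r ≥ 0, the equation H(n, r, α) = 0 has exactly one root α in the interval [π/n, π/2). -/

import Mathlib

/-!
Write `β = (π - 2α)/(n - 2)`, `L x = log (tan (π/4 + x/2))` (the inverse Gudermannian
function, `L' = 1/cos`) and `g x = cos² x · L x / sin x`. Then
`H = sin β · (sin α · (g β - g α) - r · (sin 2α + (n - 2) cos β sin β))`.
Since `L x > sin x`, `g` is strictly decreasing on `(0, π/2)`. On `[π/n, π/2)` we have
`β ≤ α` and `β` decreases as `α` increases, so the second factor is strictly increasing; it is
`≤ 0` at `α = π/n` (where `β = α`) and tends to `1 · (1 - 0) - r · 0 = 1` at `π/2`, because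
`g → 1` at `0⁺` and `g → 0` at `(π/2)⁻`.
-/

open Real

noncomputable def Hfun (n r α : ℝ) : ℝ :=
  sin α * cos ((π - 2*α)/(n-2)) ^ 2 * log (tan (π/4 + (π - 2*α)/(2*(n-2))))
    - cos α ^ 2 * sin ((π - 2*α)/(n-2)) * log (tan (π/4 + α/2))
    - r * sin (2*α) * sin ((π - 2*α)/(n-2))
    - r * (n-2) * cos ((π - 2*α)/(n-2)) * sin ((π - 2*α)/(n-2)) ^ 2

open Filter Topology Set

theorem existsUnique_zero_of_strictMonoOn_Ico {f : ℝ → ℝ} {a b l : ℝ} (hab : a < b)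
    (hcont : ContinuousOn f (Ico a b)) (hmono : StrictMonoOn f (Ico a b)) (ha : f a ≤ 0)
    (hb : Tendsto f (𝓝[<] b) (𝓝 l)) (hl : 0 < l) :
    ∃! x, x ∈ Ico a b ∧ f x = 0 := by
  obtain ⟨c, hfc, hc⟩ :=
    ((hb.eventually (eventually_gt_nhds hl)).and (Ico_mem_nhdsLT hab)).exists
  have hsub : Icc a c ⊆ Ico a b := Icc_subset_Ico_right hc.2
  obtain ⟨x, hx, hfx⟩ := intermediate_value_Icc hc.1 (hcont.mono hsub) ⟨ha, hfc.le⟩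
  exact ⟨x, ⟨hsub hx, hfx⟩, fun y hy => hmono.injOn hy.1 (hsub hx) (hy.2.trans hfx.symm)⟩

theorem tendsto_div_of_hasDerivAt {f g : ℝ → ℝ} {a f' g' : ℝ} (hf : HasDerivAt f f' a)
    (hg : HasDerivAt g g' a) (hfa : f a = 0) (hga : g a = 0) (hg' : g' ≠ 0) :
    Tendsto (fun x => f x / g x) (𝓝[≠] a) (𝓝 (f' / g')) := by
  refine ((hasDerivAt_iff_tendsto_slope.mp hf).div (hasDerivAt_iff_tendsto_slope.mp hg)
    hg').congr' ?_
  filter_upwards [self_mem_nhdsWithin] with x hx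
  rw [Pi.div_apply, slope_def_field, slope_def_field, hfa, hga, sub_zero, sub_zero,
    div_div_div_cancel_right₀ (sub_ne_zero.mpr hx)]

theorem tan_pi_div_four_add_half (x : ℝ) : tan (π/4 + x/2) = (1 + sin x) / cos x := by
  set u := π/4 + x/2
  have hx : x = 2 * u - π/2 := by ring
  have hsin : 1 + sin x = 2 * sin u * sin u := by
    rw [hx, sin_sub_pi_div_two, cos_two_mul, cos_sq']; ring
  have hcos : cos x = 2 * sin u * cos u := by
    rw [hx, cos_sub_pi_div_two, sin_two_mul]
  rw [tan_eq_sin_div_cos, hsin, hcos]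
  rcases eq_or_ne (sin u) 0 with hu | hu
  · simp [hu]
  · rw [mul_div_mul_left _ _ (by positivity)]

noncomputable def gdInv (x : ℝ) : ℝ := log (tan (π/4 + x/2))

theorem gdInv_eq (x : ℝ) : gdInv x = log ((1 + sin x) / cos x) := by
  rw [gdInv, tan_pi_div_four_add_half]

theorem gdInv_zero : gdInv 0 = 0 := by simp [gdInv_eq]

theorem hasDerivAt_gdInv {x : ℝ} (hx : cos x ≠ 0) : HasDerivAt gdInv (1 / cos x) x := by
  have hsin : 1 + sin x ≠ 0 := by
    intro h
    have := sin_sq_add_cos_sq x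
    rw [show sin x = -1 by linarith] at this
    exact hx (by nlinarith)
  have hq := ((hasDerivAt_sin x).const_add 1).div (hasDerivAt_cos x) hx
  rw [show gdInv = fun y => log ((1 + sin y) / cos y) from funext gdInv_eq]
  refine (hq.log (div_ne_zero hsin hx)).congr_deriv ?_
  simp only [Pi.div_apply]
  field_simp
  linear_combination sin_sq_add_cos_sq x

theorem sin_pos_cos_pos_of_mem_Ioo {x : ℝ} (hx : x ∈ Ioo 0 (π/2)) : 0 < sin x ∧ 0 < cos x :=
  ⟨sin_pos_of_pos_of_lt_pi hx.1 (by linarith [hx.2, pi_pos]),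
    cos_pos_of_mem_Ioo ⟨by linarith [hx.1, pi_pos], hx.2⟩⟩

theorem sin_lt_gdInv {x : ℝ} (hx : x ∈ Ioo 0 (π/2)) : sin x < gdInv x := by
  have hderiv : ∀ y ∈ Ioo (-(π/2)) (π/2), HasDerivAt (fun y => gdInv y - sin y)
      (1 / cos y - cos y) y := fun y hy =>
    (hasDerivAt_gdInv (cos_pos_of_mem_Ioo hy).ne').sub (hasDerivAt_sin y)
  have hmono : StrictMonoOn (fun y => gdInv y - sin y) (Ico 0 (π/2)) := by
    refine strictMonoOn_of_deriv_pos (convex_Ico 0 (π/2)) (fun y hy => ?_) (fun y hy => ?_)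
    · exact (hderiv y ⟨by linarith [pi_pos, hy.1], hy.2⟩).continuousAt.continuousWithinAt
    · rw [interior_Ico] at hy
      obtain ⟨hs, hc⟩ := sin_pos_cos_pos_of_mem_Ioo hy
      rw [(hderiv y ⟨by linarith [pi_pos, hy.1], hy.2⟩).deriv, sub_pos, lt_div_iff₀ hc]
      nlinarith [sin_sq_add_cos_sq y]
  have := hmono ⟨le_rfl, by positivity⟩ (Ioo_subset_Ico_self hx) hx.1
  simp only [gdInv_zero, sin_zero, sub_zero] at this
  linarith

theorem gdInv_pos {x : ℝ} (hx : x ∈ Ioo 0 (π/2)) : 0 < gdInv x :=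
  (sin_pos_cos_pos_of_mem_Ioo hx).1.trans (sin_lt_gdInv hx)

noncomputable def gdRatio (x : ℝ) : ℝ := cos x ^ 2 * gdInv x / sin x

theorem hasDerivAt_gdRatio {x : ℝ} (hc : cos x ≠ 0) (hs : sin x ≠ 0) :
    HasDerivAt gdRatio (cos x * (sin x - (1 + sin x ^ 2) * gdInv x) / sin x ^ 2) x := by
  refine ((((hasDerivAt_cos x).pow 2).mul (hasDerivAt_gdInv hc)).div (hasDerivAt_sin x)
    hs).congr_deriv ?_
  simp only [Pi.mul_apply, Pi.pow_apply]
  field_simp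
  linear_combination (-(cos x * gdInv x)) * sin_sq_add_cos_sq x

theorem continuousOn_gdRatio : ContinuousOn gdRatio (Ioo 0 (π/2)) := fun _ hx =>
  (hasDerivAt_gdRatio (sin_pos_cos_pos_of_mem_Ioo hx).2.ne'
    (sin_pos_cos_pos_of_mem_Ioo hx).1.ne').continuousAt.continuousWithinAt

theorem gdRatio_strictAntiOn : StrictAntiOn gdRatio (Ioo 0 (π/2)) := by
  refine strictAntiOn_of_deriv_neg (convex_Ioo 0 (π/2)) continuousOn_gdRatio fun x hx => ?_
  rw [interior_Ioo] at hx
  obtain ⟨hs, hc⟩ := sin_pos_cos_pos_of_mem_Ioo hx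
  have hL := gdInv_pos hx
  rw [(hasDerivAt_gdRatio hc.ne' hs.ne').deriv]
  have : sin x < (1 + sin x ^ 2) * gdInv x := by
    nlinarith [sin_lt_gdInv hx, mul_pos (pow_pos hs 2) hL]
  exact div_neg_of_neg_of_pos (mul_neg_of_pos_of_neg hc (by linarith)) (by positivity)

theorem tendsto_gdRatio_zero : Tendsto gdRatio (𝓝[>] 0) (𝓝 1) := by
  have hquot : Tendsto (fun x => gdInv x / sin x) (𝓝[≠] 0) (𝓝 1) := by
    simpa using tendsto_div_of_hasDerivAt (hasDerivAt_gdInv (by simp)) (hasDerivAt_sin 0)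
      gdInv_zero sin_zero (by simp)
  have hcos : Tendsto (fun x => cos x ^ 2) (𝓝[>] 0) (𝓝 1) := by
    simpa using ((continuous_cos.tendsto 0).pow 2).mono_left nhdsWithin_le_nhds
  have := hcos.mul (hquot.mono_left (nhdsGT_le_nhdsNE 0))
  simp only [← mul_div_assoc, mul_one] at this
  exact this

theorem gdRatio_le {x : ℝ} (hx : x ∈ Ioo 0 (π/2)) :
    gdRatio x ≤ cos x * (1 + sin x) / sin x := by
  obtain ⟨hs, hc⟩ := sin_pos_cos_pos_of_mem_Ioo hx
  have hlog : gdInv x ≤ (1 + sin x) / cos x := by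
    rw [gdInv_eq]
    linarith [log_le_sub_one_of_pos (show 0 < (1 + sin x) / cos x by positivity)]
  refine div_le_div_of_nonneg_right ?_ hs.le
  calc cos x ^ 2 * gdInv x ≤ cos x ^ 2 * ((1 + sin x) / cos x) := by gcongr
    _ = cos x * (1 + sin x) := by field_simp

theorem tendsto_gdRatio_pi_div_two : Tendsto gdRatio (𝓝[<] (π/2)) (𝓝 0) := by
  have hupper : Tendsto (fun x => cos x * (1 + sin x) / sin x) (𝓝[<] (π/2)) (𝓝 0) := by
    have : ContinuousAt (fun x => cos x * (1 + sin x) / sin x) (π/2) := by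
      fun_prop (disch := simp)
    simpa using this.tendsto.mono_left nhdsWithin_le_nhds
  have hmem : Ioo 0 (π/2) ∈ 𝓝[<] (π/2) := Ioo_mem_nhdsLT (by positivity)
  refine tendsto_of_tendsto_of_tendsto_of_le_of_le' tendsto_const_nhds hupper ?_ ?_
  · filter_upwards [hmem] with x hx
    obtain ⟨hs, hc⟩ := sin_pos_cos_pos_of_mem_Ioo hx
    exact div_nonneg (mul_nonneg (by positivity) (gdInv_pos hx).le) hs.le
  · filter_upwards [hmem] with x hx
    exact gdRatio_le hx

noncomputable def betaAngle (n α : ℝ) : ℝ := (π - 2*α)/(n-2)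

noncomputable def rCoeff (n α : ℝ) : ℝ :=
  sin (2*α) + (n-2) * cos (betaAngle n α) * sin (betaAngle n α)

noncomputable def Hreduced (n r α : ℝ) : ℝ :=
  sin α * (gdRatio (betaAngle n α) - gdRatio α) - r * rCoeff n α

section

variable {n α : ℝ}

theorem continuous_betaAngle : Continuous (betaAngle n) := by
  unfold betaAngle; fun_prop

theorem hasDerivAt_betaAngle (α : ℝ) : HasDerivAt (betaAngle n) (-2/(n-2)) α := by
  unfold betaAngle
  exact ((((hasDerivAt_id α).const_mul 2).const_sub π).div_const (n-2)).congr_deriv (by simp)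

theorem betaAngle_strictAnti (hn : 2 < n) : StrictAnti (betaAngle n) := fun a b hab => by
  unfold betaAngle
  gcongr

theorem betaAngle_pi_div (hn : 2 < n) : betaAngle n (π/n) = π/n := by
  have : n - 2 ≠ 0 := by linarith
  unfold betaAngle
  field_simp

theorem betaAngle_mem_Ioc (hn : 2 < n) (hα : α ∈ Ico (π/n) (π/2)) :
    betaAngle n α ∈ Ioc 0 α := by
  have hn2 : 0 < n - 2 := by linarith
  have hnα : π ≤ n * α := by rw [← div_le_iff₀' (by linarith)]; exact hα.1
  refine ⟨div_pos (by linarith [hα.2]) hn2, ?_⟩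
  rw [betaAngle, div_le_iff₀ hn2]
  linarith

theorem betaAngle_mem_Ioo (hn : 2 < n) (hα : α ∈ Ico (π/n) (π/2)) :
    betaAngle n α ∈ Ioo 0 (π/2) :=
  ⟨(betaAngle_mem_Ioc hn hα).1, (betaAngle_mem_Ioc hn hα).2.trans_lt hα.2⟩

theorem pi_div_lt_pi_div_two (hn : 2 < n) : π/n < π/2 := by
  gcongr

theorem mem_Ioo_of_mem_Ico_pi_div (hn : 2 < n) (hα : α ∈ Ico (π/n) (π/2)) : α ∈ Ioo 0 (π/2) :=
  Ico_subset_Ioo_left (div_pos pi_pos (by linarith)) hα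

theorem tendsto_betaAngle (hn : 2 < n) : Tendsto (betaAngle n) (𝓝[<] (π/2)) (𝓝[>] 0) := by
  refine tendsto_nhdsWithin_iff.mpr ⟨?_, ?_⟩
  · have h0 : betaAngle n (π/2) = 0 := by unfold betaAngle; ring
    exact h0 ▸ (continuous_betaAngle.tendsto (π/2)).mono_left nhdsWithin_le_nhds
  · filter_upwards [self_mem_nhdsWithin] with α (hα : α < π/2)
    exact div_pos (by linarith : 0 < π - 2*α) (by linarith : (0:ℝ) < n - 2)

theorem continuous_rCoeff : Continuous (rCoeff n) := by
  unfold rCoeff betaAngle; fun_prop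

theorem hasDerivAt_rCoeff (hn : n ≠ 2) (α : ℝ) :
    HasDerivAt (rCoeff n) (2 * cos (2*α) - 2 * cos (2 * betaAngle n α)) α := by
  have hβ := hasDerivAt_betaAngle (n := n) α
  refine ((((hasDerivAt_id α).const_mul 2).sin).add
    ((hβ.cos.const_mul (n-2)).mul hβ.sin)).congr_deriv ?_
  have : n - 2 ≠ 0 := sub_ne_zero.mpr hn
  rw [cos_two_mul' (betaAngle n α)]
  simp only [id_eq]
  field_simp
  ring

theorem rCoeff_antitoneOn (hn : 2 < n) : AntitoneOn (rCoeff n) (Ico (π/n) (π/2)) := by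
  refine antitoneOn_of_deriv_nonpos (convex_Ico _ _) continuous_rCoeff.continuousOn
    (fun α _ => (hasDerivAt_rCoeff hn.ne' α).differentiableAt.differentiableWithinAt) fun α hα => ?_
  rw [interior_Ico] at hα
  have hβ := betaAngle_mem_Ioc hn (Ioo_subset_Ico_self hα)
  rw [(hasDerivAt_rCoeff hn.ne' α).deriv]
  linarith [cos_le_cos_of_nonneg_of_le_pi (by linarith [hβ.1]) (by linarith [hα.2])
    (by linarith [hβ.2] : 2 * betaAngle n α ≤ 2 * α)]

theorem rCoeff_pi_div_nonneg (hn : 2 < n) : 0 ≤ rCoeff n (π/n) := by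
  have hα : π/n ∈ Ioo 0 (π/2) := mem_Ioo_of_mem_Ico_pi_div hn ⟨le_rfl, pi_div_lt_pi_div_two hn⟩
  obtain ⟨hs, hc⟩ := sin_pos_cos_pos_of_mem_Ioo hα
  have hs2 : 0 ≤ sin (2 * (π/n)) :=
    sin_nonneg_of_nonneg_of_le_pi (by linarith [hα.1]) (by linarith [hα.2])
  rw [rCoeff, betaAngle_pi_div hn]
  have : 0 ≤ (n - 2) * cos (π/n) * sin (π/n) := by
    have : 0 ≤ n - 2 := by linarith
    positivity
  linarith

end

section

variable {n r α : ℝ}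

theorem Hfun_eq_sin_mul_Hreduced (hα : sin α ≠ 0) (hβ : sin (betaAngle n α) ≠ 0) :
    Hfun n r α = sin (betaAngle n α) * Hreduced n r α := by
  have hhalf : (π - 2*α)/(2*(n-2)) = betaAngle n α / 2 := by
    rw [betaAngle, div_div, mul_comm (n - 2)]
  rw [Hfun, hhalf]
  unfold Hreduced rCoeff gdRatio gdInv
  unfold betaAngle at hβ ⊢
  field_simp
  ring

theorem strictMonoOn_sin_mul_gdRatio_sub (hn : 2 < n) :
    StrictMonoOn (fun α => sin α * (gdRatio (betaAngle n α) - gdRatio α))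
      (Ico (π/n) (π/2)) := by
  intro a ha b hb hab
  have ha' := mem_Ioo_of_mem_Ico_pi_div hn ha
  have hb' := mem_Ioo_of_mem_Ico_pi_div hn hb
  have hβ : gdRatio (betaAngle n a) < gdRatio (betaAngle n b) :=
    gdRatio_strictAntiOn (betaAngle_mem_Ioo hn hb) (betaAngle_mem_Ioo hn ha)
      (betaAngle_strictAnti hn hab)
  have hα : gdRatio b < gdRatio a := gdRatio_strictAntiOn ha' hb' hab
  have hβα : gdRatio a ≤ gdRatio (betaAngle n a) :=
    gdRatio_strictAntiOn.antitoneOn (betaAngle_mem_Ioo hn ha) ha' (betaAngle_mem_Ioc hn ha).2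
  have hsin : sin a < sin b := strictMonoOn_sin ⟨by linarith [ha'.1, pi_pos], ha'.2.le⟩
    ⟨by linarith [hb'.1, pi_pos], hb'.2.le⟩ hab
  have hsb := (sin_pos_cos_pos_of_mem_Ioo hb').1
  calc sin a * (gdRatio (betaAngle n a) - gdRatio a)
      ≤ sin b * (gdRatio (betaAngle n a) - gdRatio a) := by gcongr
    _ < sin b * (gdRatio (betaAngle n b) - gdRatio b) := by gcongr

theorem Hreduced_strictMonoOn (hn : 2 < n) (hr : 0 ≤ r) :
    StrictMonoOn (Hreduced n r) (Ico (π/n) (π/2)) := fun a ha b hb hab => by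
  have := mul_le_mul_of_nonneg_left (rCoeff_antitoneOn hn ha hb hab.le) hr
  have := strictMonoOn_sin_mul_gdRatio_sub hn ha hb hab
  simp only [Hreduced] at *
  linarith

theorem Hreduced_pi_div_nonpos (hn : 2 < n) (hr : 0 ≤ r) : Hreduced n r (π/n) ≤ 0 := by
  rw [Hreduced, betaAngle_pi_div hn, sub_self, mul_zero, zero_sub, neg_nonpos]
  exact mul_nonneg hr (rCoeff_pi_div_nonneg hn)

theorem continuousOn_Hreduced (hn : 2 < n) : ContinuousOn (Hreduced n r) (Ico (π/n) (π/2)) :=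
  (continuous_sin.continuousOn.mul
    ((continuousOn_gdRatio.comp continuous_betaAngle.continuousOn fun _ => betaAngle_mem_Ioo hn).sub
      (continuousOn_gdRatio.mono fun _ => mem_Ioo_of_mem_Ico_pi_div hn))).sub
    (continuousOn_const.mul continuous_rCoeff.continuousOn)

theorem tendsto_Hreduced (hn : 2 < n) : Tendsto (Hreduced n r) (𝓝[<] (π/2)) (𝓝 1) := by
  have hsin : Tendsto sin (𝓝[<] (π/2)) (𝓝 1) := by
    simpa using (continuous_sin.tendsto (π/2)).mono_left nhdsWithin_le_nhds
  have hcoeff : Tendsto (rCoeff n) (𝓝[<] (π/2)) (𝓝 0) := by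
    have h0 : rCoeff n (π/2) = 0 := by simp [rCoeff, betaAngle, show 2 * (π/2) = π by ring]
    exact h0 ▸ (continuous_rCoeff.tendsto (π/2)).mono_left nhdsWithin_le_nhds
  show Tendsto (fun α => sin α * (gdRatio (betaAngle n α) - gdRatio α) - r * rCoeff n α) _ _
  simpa using (hsin.mul ((tendsto_gdRatio_zero.comp (tendsto_betaAngle hn)).sub
    tendsto_gdRatio_pi_div_two)).sub (hcoeff.const_mul r)

end

theorem stmt_9 (n r : ℝ) (hn : 3 ≤ n) (hr : 0 ≤ r) :
    ∃! α, α ∈ Set.Ico (π/n) (π/2) ∧ Hfun n r α = 0 := by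
  have hn2 : 2 < n := by linarith
  have hzero : ∀ α ∈ Ico (π/n) (π/2), Hfun n r α = 0 ↔ Hreduced n r α = 0 := fun α hα => by
    have hsα := (sin_pos_cos_pos_of_mem_Ioo (mem_Ioo_of_mem_Ico_pi_div hn2 hα)).1
    have hsβ := (sin_pos_cos_pos_of_mem_Ioo (betaAngle_mem_Ioo hn2 hα)).1
    rw [Hfun_eq_sin_mul_Hreduced hsα.ne' hsβ.ne', mul_eq_zero, or_iff_right hsβ.ne']
  rw [existsUnique_congr fun α => and_congr_right (hzero α)]
  exact existsUnique_zero_of_strictMonoOn_Ico (pi_div_lt_pi_div_two hn2)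
    (continuousOn_Hreduced hn2) (Hreduced_strictMonoOn hn2 hr) (Hreduced_pi_div_nonpos hn2 hr)
    (tendsto_Hreduced hn2) one_pos
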